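/- arXiv:1108.5215 — 8 statements merged into one kernel-verified Lean document; each statement's English description precedes it below -/
import Mathlib

section
/- For every complex numbers α and β with |α| = 1 and |β| = 1, the 8×8 matrix R(α,β) = X ⊕ Y, where X = (1/√2)·[[1,0,α,0],[0,i,0,β],[−i·conj(α),0,i,0],[0,−i·conj(β),0,1]] and Y = (1/√2)·[[i,0,β,0],[0,1,0,−conj(α)·β²],[−i·conj(β),0,1,0],[0,i·α·conj(β)²,0,i]], is a unitary matrix and satisfies the (2,3,1)-generalized Yang–Baxter equation. (First family of solutions.) -/
open Matrix Complex
open scoped Kronecker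

/-- `R ⊗ I₂`, reindexed as a 16×16 matrix. -/
noncomputable def R1of (R : Matrix (Fin 8) (Fin 8) ℂ) : Matrix (Fin 16) (Fin 16) ℂ :=
  Matrix.reindex finProdFinEquiv finProdFinEquiv (R ⊗ₖ (1 : Matrix (Fin 2) (Fin 2) ℂ))

/-- `I₂ ⊗ R`, reindexed as a 16×16 matrix. -/
noncomputable def R2of (R : Matrix (Fin 8) (Fin 8) ℂ) : Matrix (Fin 16) (Fin 16) ℂ :=
  Matrix.reindex finProdFinEquiv finProdFinEquiv ((1 : Matrix (Fin 2) (Fin 2) ℂ) ⊗ₖ R)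

/-- The (2,3,1)-generalized Yang–Baxter equation. -/
def gYBE231 (R : Matrix (Fin 8) (Fin 8) ℂ) : Prop :=
  R1of R * R2of R * R1of R = R2of R * R1of R * R2of R

/-- Block diagonal sum `X ⊕ Y` of two 4×4 matrices, as an 8×8 matrix. -/
noncomputable def dSum (X Y : Matrix (Fin 4) (Fin 4) ℂ) : Matrix (Fin 8) (Fin 8) ℂ :=
  Matrix.reindex finSumFinEquiv finSumFinEquiv (Matrix.fromBlocks X 0 0 Y)

@[simp]
lemma cons_val_five {α : Type*} {m : ℕ} (x : α) (u : Fin m.succ.succ.succ.succ.succ → α) :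
    Matrix.vecCons x u 5 = vecHead (vecTail (vecTail (vecTail (vecTail (u))))) :=
  rfl

@[simp]
lemma cons_val_six {α : Type*} {m : ℕ} (x : α) (u : Fin m.succ.succ.succ.succ.succ.succ → α) :
    Matrix.vecCons x u 6 = vecHead (vecTail (vecTail (vecTail (vecTail (vecTail (u)))))) :=
  rfl

@[simp]
lemma cons_val_seven {α : Type*} {m : ℕ} (x : α) (u : Fin m.succ.succ.succ.succ.succ.succ.succ → α) :
    Matrix.vecCons x u 7 = vecHead (vecTail (vecTail (vecTail (vecTail (vecTail (vecTail (u))))))) :=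
  rfl

@[simp]
lemma cons_val_eight {α : Type*} {m : ℕ} (x : α) (u : Fin m.succ.succ.succ.succ.succ.succ.succ.succ → α) :
    Matrix.vecCons x u 8 = vecHead (vecTail (vecTail (vecTail (vecTail (vecTail (vecTail (vecTail (u)))))))) :=
  rfl

@[simp]
lemma cons_val_nine {α : Type*} {m : ℕ} (x : α) (u : Fin m.succ.succ.succ.succ.succ.succ.succ.succ.succ → α) :
    Matrix.vecCons x u 9 = vecHead (vecTail (vecTail (vecTail (vecTail (vecTail (vecTail (vecTail (vecTail (u))))))))) :=
  rfl

@[simp]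
lemma cons_val_ten {α : Type*} {m : ℕ} (x : α) (u : Fin m.succ.succ.succ.succ.succ.succ.succ.succ.succ.succ → α) :
    Matrix.vecCons x u 10 = vecHead (vecTail (vecTail (vecTail (vecTail (vecTail (vecTail (vecTail (vecTail (vecTail (u)))))))))) :=
  rfl

@[simp]
lemma cons_val_eleven {α : Type*} {m : ℕ} (x : α) (u : Fin m.succ.succ.succ.succ.succ.succ.succ.succ.succ.succ.succ → α) :
    Matrix.vecCons x u 11 = vecHead (vecTail (vecTail (vecTail (vecTail (vecTail (vecTail (vecTail (vecTail (vecTail (vecTail (u))))))))))) :=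
  rfl

@[simp]
lemma cons_val_twelve {α : Type*} {m : ℕ} (x : α) (u : Fin m.succ.succ.succ.succ.succ.succ.succ.succ.succ.succ.succ.succ → α) :
    Matrix.vecCons x u 12 = vecHead (vecTail (vecTail (vecTail (vecTail (vecTail (vecTail (vecTail (vecTail (vecTail (vecTail (vecTail (u)))))))))))) :=
  rfl

@[simp]
lemma cons_val_thirteen {α : Type*} {m : ℕ} (x : α) (u : Fin m.succ.succ.succ.succ.succ.succ.succ.succ.succ.succ.succ.succ.succ → α) :
    Matrix.vecCons x u 13 = vecHead (vecTail (vecTail (vecTail (vecTail (vecTail (vecTail (vecTail (vecTail (vecTail (vecTail (vecTail (vecTail (u))))))))))))) :=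
  rfl

@[simp]
lemma cons_val_fourteen {α : Type*} {m : ℕ} (x : α) (u : Fin m.succ.succ.succ.succ.succ.succ.succ.succ.succ.succ.succ.succ.succ.succ → α) :
    Matrix.vecCons x u 14 = vecHead (vecTail (vecTail (vecTail (vecTail (vecTail (vecTail (vecTail (vecTail (vecTail (vecTail (vecTail (vecTail (vecTail (u)))))))))))))) :=
  rfl

@[simp]
lemma cons_val_fifteen {α : Type*} {m : ℕ} (x : α) (u : Fin m.succ.succ.succ.succ.succ.succ.succ.succ.succ.succ.succ.succ.succ.succ.succ → α) :
    Matrix.vecCons x u 15 = vecHead (vecTail (vecTail (vecTail (vecTail (vecTail (vecTail (vecTail (vecTail (vecTail (vecTail (vecTail (vecTail (vecTail (vecTail (u))))))))))))))) :=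
  rfl

noncomputable def R0m (α β : ℂ) : Matrix (Fin 8) (Fin 8) ℂ :=
  !![1, 0, α, 0, 0, 0, 0, 0;
    0, I, 0, β, 0, 0, 0, 0;
    -(I * star α), 0, I, 0, 0, 0, 0, 0;
    0, -(I * star β), 0, 1, 0, 0, 0, 0;
    0, 0, 0, 0, I, 0, β, 0;
    0, 0, 0, 0, 0, 1, 0, -(star α * β ^ 2);
    0, 0, 0, 0, -(I * star β), 0, 1, 0;
    0, 0, 0, 0, 0, I * α * (star β) ^ 2, 0, I]

noncomputable def Pm (α β : ℂ) : Matrix (Fin 8) (Fin 8) ℂ :=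
  !![1, 0, 0, 0, α, 0, 0, 0;
    0, 1, 0, 0, 0, α, 0, 0;
    0, 0, I, 0, 0, 0, β, 0;
    0, 0, 0, I, 0, 0, 0, β;
    -(I * star α), 0, 0, 0, I, 0, 0, 0;
    0, -(I * star α), 0, 0, 0, I, 0, 0;
    0, 0, -(I * star β), 0, 0, 0, 1, 0;
    0, 0, 0, -(I * star β), 0, 0, 0, 1]

noncomputable def Qm (α β : ℂ) : Matrix (Fin 8) (Fin 8) ℂ :=
  !![I, 0, 0, 0, β, 0, 0, 0;
    0, I, 0, 0, 0, β, 0, 0;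
    0, 0, 1, 0, 0, 0, -(star α * β ^ 2), 0;
    0, 0, 0, 1, 0, 0, 0, -(star α * β ^ 2);
    -(I * star β), 0, 0, 0, 1, 0, 0, 0;
    0, -(I * star β), 0, 0, 0, 1, 0, 0;
    0, 0, I * α * (star β) ^ 2, 0, 0, 0, I, 0;
    0, 0, 0, I * α * (star β) ^ 2, 0, 0, 0, I]

/-- Block diagonal sum of two 8×8 matrices, as a 16×16 matrix. -/
noncomputable def bd (M N : Matrix (Fin 8) (Fin 8) ℂ) : Matrix (Fin 16) (Fin 16) ℂ :=
  Matrix.reindex finSumFinEquiv finSumFinEquiv (Matrix.fromBlocks M 0 0 N)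

lemma hR0 (α β : ℂ) : dSum !![1, 0, α, 0;
          0, I, 0, β;
          -(I * star α), 0, I, 0;
          0, -(I * star β), 0, 1] !![I, 0, β, 0;
          0, 1, 0, -(star α * β ^ 2);
          -(I * star β), 0, 1, 0;
          0, I * α * (star β) ^ 2, 0, I] = R0m α β := by
  ext i j
  fin_cases i <;> fin_cases j <;> rfl

lemma dSum_smul (c : ℂ) (X Y : Matrix (Fin 4) (Fin 4) ℂ) :
    dSum (c • X) (c • Y) = c • dSum X Y := by
  ext i j
  fin_cases i <;> fin_cases j <;> first | rfl | exact (mul_zero c).symm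

lemma R1of_smul (c : ℂ) (R : Matrix (Fin 8) (Fin 8) ℂ) : R1of (c • R) = c • R1of R := by
  unfold R1of
  rw [Matrix.smul_kronecker]
  rfl

lemma R2of_smul (c : ℂ) (R : Matrix (Fin 8) (Fin 8) ℂ) : R2of (c • R) = c • R2of R := by
  unfold R2of
  rw [Matrix.kronecker_smul]
  rfl

lemma hA (α β : ℂ) : R1of (R0m α β) = bd (Pm α β) (Qm α β) := by
  ext i j
  fin_cases i <;> fin_cases j <;>
    first | exact mul_one _ | exact mul_zero _ | exact zero_mul _

lemma hB (α β : ℂ) : R2of (R0m α β) = bd (R0m α β) (R0m α β) := by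
  ext i j
  fin_cases i <;> fin_cases j <;> first | exact one_mul _ | exact zero_mul _

lemma bd_mul (M N M' N' : Matrix (Fin 8) (Fin 8) ℂ) :
    bd M N * bd M' N' = bd (M * M') (N * N') := by
  unfold bd
  simp only [Matrix.reindex_apply, Matrix.submatrix_mul_equiv, Matrix.fromBlocks_multiply]
  simp

set_option maxHeartbeats 4000000 in
lemma hU (α β : ℂ) (hα0 : α ≠ 0) (hβ0 : β ≠ 0)
    (hca : (starRingEnd ℂ) α = α⁻¹) (hcb : (starRingEnd ℂ) β = β⁻¹) :
    R0m α β * star (R0m α β) = (2 : ℂ) • (1 : Matrix (Fin 8) (Fin 8) ℂ) := by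
  have hI2 : (I:ℂ)^2 = -1 := Complex.I_sq
  have hI3 : (I:ℂ)^3 = -I := by rw [pow_succ, hI2]; ring
  ext i j
  fin_cases i <;> fin_cases j <;>
    (simp [R0m, Pm, Qm, Matrix.mul_apply, Fin.sum_univ_succ, Matrix.star_apply,
       Matrix.one_apply, hca, hcb] <;>
     (try field_simp) <;> (try ring_nf) <;> (try simp [hI2, hI3]) <;> (try ring_nf) <;>
     (try ring))

set_option maxHeartbeats 4000000 in
lemma hP (α β : ℂ) (hα0 : α ≠ 0) (hβ0 : β ≠ 0)
    (hca : (starRingEnd ℂ) α = α⁻¹) (hcb : (starRingEnd ℂ) β = β⁻¹) :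
    Pm α β * R0m α β * Pm α β = R0m α β * Pm α β * R0m α β := by
  have hI2 : (I:ℂ)^2 = -1 := Complex.I_sq
  have hI3 : (I:ℂ)^3 = -I := by rw [pow_succ, hI2]; ring
  ext i j
  fin_cases i <;> fin_cases j <;>
    (simp [R0m, Pm, Qm, Matrix.mul_apply, Fin.sum_univ_succ, Matrix.star_apply,
       Matrix.one_apply, hca, hcb] <;>
     (try field_simp) <;> (try ring_nf) <;> (try simp [hI2, hI3]) <;> (try ring_nf) <;>
     (try ring))

set_option maxHeartbeats 4000000 in
lemma hQ (α β : ℂ) (hα0 : α ≠ 0) (hβ0 : β ≠ 0)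
    (hca : (starRingEnd ℂ) α = α⁻¹) (hcb : (starRingEnd ℂ) β = β⁻¹) :
    Qm α β * R0m α β * Qm α β = R0m α β * Qm α β * R0m α β := by
  have hI2 : (I:ℂ)^2 = -1 := Complex.I_sq
  have hI3 : (I:ℂ)^3 = -I := by rw [pow_succ, hI2]; ring
  ext i j
  fin_cases i <;> fin_cases j <;>
    (simp [R0m, Pm, Qm, Matrix.mul_apply, Fin.sum_univ_succ, Matrix.star_apply,
       Matrix.one_apply, hca, hcb] <;>
     (try field_simp) <;> (try ring_nf) <;> (try simp [hI2, hI3]) <;> (try ring_nf) <;>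
     (try ring))

theorem first_family_unitary_gYBE (α β : ℂ)
    (hα : ‖α‖ = 1) (hβ : ‖β‖ = 1) :
    dSum
        ((Real.sqrt 2 : ℂ)⁻¹ • !![1, 0, α, 0;
          0, I, 0, β;
          -(I * star α), 0, I, 0;
          0, -(I * star β), 0, 1])
        ((Real.sqrt 2 : ℂ)⁻¹ • !![I, 0, β, 0;
          0, 1, 0, -(star α * β ^ 2);
          -(I * star β), 0, 1, 0;
          0, I * α * (star β) ^ 2, 0, I])
      ∈ Matrix.unitaryGroup (Fin 8) ℂ ∧
    gYBE231 (dSum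
        ((Real.sqrt 2 : ℂ)⁻¹ • !![1, 0, α, 0;
          0, I, 0, β;
          -(I * star α), 0, I, 0;
          0, -(I * star β), 0, 1])
        ((Real.sqrt 2 : ℂ)⁻¹ • !![I, 0, β, 0;
          0, 1, 0, -(star α * β ^ 2);
          -(I * star β), 0, 1, 0;
          0, I * α * (star β) ^ 2, 0, I])) := by
  have hα0 : α ≠ 0 := by intro h; rw [h] at hα; simp at hα
  have hβ0 : β ≠ 0 := by intro h; rw [h] at hβ; simp at hβ
  have hca : (starRingEnd ℂ) α = α⁻¹ := by
    have h1 : α * (starRingEnd ℂ) α = 1 := by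
      rw [Complex.mul_conj, Complex.normSq_eq_norm_sq, hα]; norm_num
    exact eq_inv_of_mul_eq_one_right h1
  have hcb : (starRingEnd ℂ) β = β⁻¹ := by
    have h1 : β * (starRingEnd ℂ) β = 1 := by
      rw [Complex.mul_conj, Complex.normSq_eq_norm_sq, hβ]; norm_num
    exact eq_inv_of_mul_eq_one_right h1
  have hstar : star ((Real.sqrt 2 : ℂ))⁻¹ = ((Real.sqrt 2 : ℂ))⁻¹ := by
    simp [Complex.star_def, map_inv₀, Complex.conj_ofReal]
  have hs : ((Real.sqrt 2 : ℂ))⁻¹ * ((Real.sqrt 2 : ℂ))⁻¹ * 2 = 1 := by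
    rw [← mul_inv, ← Complex.ofReal_mul, Real.mul_self_sqrt (by norm_num)]
    norm_num
  rw [dSum_smul, hR0]
  constructor
  · rw [Matrix.mem_unitaryGroup_iff, star_smul, hstar, smul_mul_smul_comm,
      hU α β hα0 hβ0 hca hcb, smul_smul, hs, one_smul]
  · unfold gYBE231
    rw [R1of_smul, R2of_smul, hA, hB]
    simp only [smul_mul_smul_comm]
    congr 1
    rw [bd_mul, bd_mul, bd_mul, bd_mul, hP α β hα0 hβ0 hca hcb, hQ α β hα0 hβ0 hca hcb]
end

section
/- Let X be a 4×4 complex matrix. Then the 8×8 block-diagonal matrix X ⊕ X satisfies the (2,3,1)-generalized Yang–Baxter equation if and only if X satisfies the Yang–Baxter equation in dimension 2. -/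
open Matrix Complex
open scoped Kronecker

/-- `X ⊗ I₂`, reindexed as an 8×8 matrix. -/
noncomputable def X1of (X : Matrix (Fin 4) (Fin 4) ℂ) : Matrix (Fin 8) (Fin 8) ℂ :=
  Matrix.reindex finProdFinEquiv finProdFinEquiv (X ⊗ₖ (1 : Matrix (Fin 2) (Fin 2) ℂ))

/-- `I₂ ⊗ X`, reindexed as an 8×8 matrix. -/
noncomputable def X2of (X : Matrix (Fin 4) (Fin 4) ℂ) : Matrix (Fin 8) (Fin 8) ℂ :=
  Matrix.reindex finProdFinEquiv finProdFinEquiv ((1 : Matrix (Fin 2) (Fin 2) ℂ) ⊗ₖ X)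

/-- The Yang–Baxter equation in dimension 2. -/
def YBE2 (X : Matrix (Fin 4) (Fin 4) ℂ) : Prop :=
  X1of X * X2of X * X1of X = X2of X * X1of X * X2of X


set_option maxHeartbeats 2000000 in
private lemma dSum_eq_X2of (X : Matrix (Fin 4) (Fin 4) ℂ) : dSum X X = X2of X := by
  ext i j
  fin_cases i <;> fin_cases j <;>
    norm_num [dSum, X2of, Matrix.one_apply, finSumFinEquiv, finProdFinEquiv,
      Fin.divNat, Fin.modNat, Fin.addCases, Fin.subNat, Fin.castLT,
      Matrix.fromBlocks, Fin.ext_iff]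

set_option maxHeartbeats 8000000 in
private lemma R1of_X2of (X : Matrix (Fin 4) (Fin 4) ℂ) :
    R1of (X2of X) = Matrix.reindex finProdFinEquiv finProdFinEquiv
      ((1 : Matrix (Fin 2) (Fin 2) ℂ) ⊗ₖ X1of X) := by
  ext i j
  fin_cases i <;> fin_cases j <;>
    norm_num [R1of, X1of, X2of, Matrix.one_apply, finProdFinEquiv,
      Fin.divNat, Fin.modNat, Fin.ext_iff]

private lemma R2of_X2of (X : Matrix (Fin 4) (Fin 4) ℂ) :
    R2of (X2of X) = Matrix.reindex finProdFinEquiv finProdFinEquiv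
      ((1 : Matrix (Fin 2) (Fin 2) ℂ) ⊗ₖ X2of X) := rfl

private lemma reindex_mul (A B : Matrix (Fin 2 × Fin 8) (Fin 2 × Fin 8) ℂ) :
    Matrix.reindex finProdFinEquiv finProdFinEquiv A *
      Matrix.reindex finProdFinEquiv finProdFinEquiv B =
    Matrix.reindex finProdFinEquiv finProdFinEquiv (A * B) := by
  simp [Matrix.reindex_apply, Matrix.submatrix_mul_equiv]

private lemma one_kron_mul (A B : Matrix (Fin 8) (Fin 8) ℂ) :
    ((1 : Matrix (Fin 2) (Fin 2) ℂ) ⊗ₖ A) * ((1 : Matrix (Fin 2) (Fin 2) ℂ) ⊗ₖ B)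
      = (1 : Matrix (Fin 2) (Fin 2) ℂ) ⊗ₖ (A * B) := by
  rw [← Matrix.mul_kronecker_mul, one_mul]

private lemma one_kron_inj {A B : Matrix (Fin 8) (Fin 8) ℂ}
    (h : (1 : Matrix (Fin 2) (Fin 2) ℂ) ⊗ₖ A = (1 : Matrix (Fin 2) (Fin 2) ℂ) ⊗ₖ B) :
    A = B := by
  ext i j
  have := congrFun (congrFun h (0, i)) (0, j)
  simpa [Matrix.kroneckerMap_apply, Matrix.one_apply] using this

theorem doubled_gYBE_iff_YBE (X : Matrix (Fin 4) (Fin 4) ℂ) :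
    gYBE231 (dSum X X) ↔ YBE2 X := by
  unfold gYBE231 YBE2
  rw [dSum_eq_X2of, R1of_X2of, R2of_X2of, reindex_mul, reindex_mul, reindex_mul,
    reindex_mul, one_kron_mul, one_kron_mul, one_kron_mul, one_kron_mul]
  constructor
  · intro h
    exact one_kron_inj ((Matrix.reindex finProdFinEquiv finProdFinEquiv).injective h)
  · intro h
    rw [h]
end

section
/- Let R be an invertible n×n complex matrix (n ≥ 1). If R² ⊗ R = R ⊗ R², where ⊗ denotes the Kronecker product, then there exists a nonzero complex number λ such that R = λ·Iₙ, where Iₙ is the n×n identity matrix. (Equivalently, any invertible solution R of the (n,1,1)-generalized Yang–Baxter equation (R ⊗ I)(I ⊗ R)(R ⊗ I) = (I ⊗ R)(R ⊗ I)(I ⊗ R) is a scalar multiple of the identity.) -/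
open Matrix
open scoped Kronecker

theorem gYBE_n11_scalar (n : ℕ) (hn : 1 ≤ n) (R : Matrix (Fin n) (Fin n) ℂ)
    (hR : IsUnit R) (h : (R * R) ⊗ₖ R = R ⊗ₖ (R * R)) :
    ∃ lam : ℂ, lam ≠ 0 ∧ R = lam • (1 : Matrix (Fin n) (Fin n) ℂ) := by
  have hdet : IsUnit R.det := (Matrix.isUnit_iff_isUnit_det R).mp hR
  have hinv : R * R⁻¹ = 1 := Matrix.mul_nonsing_inv R hdet
  have hR0 : R ≠ 0 := by
    intro h0
    have h1 : (1 : Matrix (Fin n) (Fin n) ℂ) (⟨0, hn⟩) (⟨0, hn⟩) = 0 := by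
      rw [← hinv, h0]; simp
    simp at h1
  obtain ⟨k, l, hkl⟩ : ∃ k l, R k l ≠ 0 := by
    by_contra hc
    push_neg at hc
    exact hR0 (by ext i j; simp [hc])
  set lam : ℂ := (R * R) k l / R k l with hlam
  have key : ∀ i j, (R * R) i j = lam * R i j := by
    intro i j
    have h2 := congrFun (congrFun h (i, k)) (j, l)
    simp only [Matrix.kroneckerMap_apply] at h2
    rw [hlam]
    field_simp
    linear_combination h2
  have hRR : R * R = lam • R := by
    ext i j; simpa using key i j
  have hR1 : R = lam • (1 : Matrix (Fin n) (Fin n) ℂ) := by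
    calc R = (R * R) * R⁻¹ := by rw [Matrix.mul_assoc, hinv, Matrix.mul_one]
      _ = lam • (R * R⁻¹) := by rw [hRR, Matrix.smul_mul]
      _ = lam • 1 := by rw [hinv]
  refine ⟨lam, ?_, hR1⟩
  intro hl0
  rw [hl0, zero_smul] at hR1
  exact hR0 hR1
end

section
/- Let X and Y be 4×4 complex matrices and let R = X ⊕ Y be the 8×8 block-diagonal matrix. Then R satisfies the (2,3,1)-generalized Yang–Baxter equation if and only if both (X ⊗ I₂)·R·(X ⊗ I₂) = R·(X ⊗ I₂)·R and (Y ⊗ I₂)·R·(Y ⊗ I₂) = R·(Y ⊗ I₂)·R hold as equations of 8×8 matrices, where ⊗ denotes the Kronecker product and I₂ the 2×2 identity matrix. -/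
open Matrix Complex
open scoped Kronecker

/-- `X ⊗ I₂`, reindexed as an 8×8 matrix. -/
noncomputable def kronI2 (X : Matrix (Fin 4) (Fin 4) ℂ) : Matrix (Fin 8) (Fin 8) ℂ :=
  Matrix.reindex finProdFinEquiv finProdFinEquiv (X ⊗ₖ (1 : Matrix (Fin 2) (Fin 2) ℂ))

namespace GYBEAux

abbrev S := Fin 4 ⊕ Fin 4

/-- generic entry function -/
noncomputable def G (X Y : Matrix (Fin 4) (Fin 4) ℂ) (p q : S × Fin 2) : ℂ :=
  Matrix.fromBlocks X (0 : Matrix (Fin 4) (Fin 4) ℂ) 0 Y p.1 q.1 *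
    (1 : Matrix (Fin 2) (Fin 2) ℂ) p.2 q.2

/-- index map for `R1of (dSum X Y)` -/
def u1 (a : Fin 16) : S × Fin 2 :=
  ((finSumFinEquiv (m := 4) (n := 4)).symm ((finProdFinEquiv (m := 8) (n := 2)).symm a).1,
   ((finProdFinEquiv (m := 8) (n := 2)).symm a).2)

/-- index map for the block form of `R1of` -/
def v1 (a : Fin 16) : S × Fin 2 :=
  Sum.elim
    (fun p => ((Sum.inl ((finProdFinEquiv (m := 4) (n := 2)).symm p).1 : S),
      ((finProdFinEquiv (m := 4) (n := 2)).symm p).2))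
    (fun p => ((Sum.inr ((finProdFinEquiv (m := 4) (n := 2)).symm p).1 : S),
      ((finProdFinEquiv (m := 4) (n := 2)).symm p).2))
    ((finSumFinEquiv (m := 8) (n := 8)).symm a)

/-- index map for `R2of (dSum X Y)` -/
def u2 (a : Fin 16) : S × Fin 2 :=
  ((finSumFinEquiv (m := 4) (n := 4)).symm ((finProdFinEquiv (m := 2) (n := 8)).symm a).2,
   ((finProdFinEquiv (m := 2) (n := 8)).symm a).1)

/-- index map for the block form of `R2of` -/
def v2 (a : Fin 16) : S × Fin 2 :=
  Sum.elim
    (fun p => ((finSumFinEquiv (m := 4) (n := 4)).symm p, (0 : Fin 2)))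
    (fun p => ((finSumFinEquiv (m := 4) (n := 4)).symm p, (1 : Fin 2)))
    ((finSumFinEquiv (m := 8) (n := 8)).symm a)

lemma u1_eq_v1 : u1 = v1 := by decide
lemma u2_eq_v2 : u2 = v2 := by decide

lemma R1_entry (X Y : Matrix (Fin 4) (Fin 4) ℂ) (a b : Fin 16) :
    R1of (dSum X Y) a b = G X Y (u1 a) (u1 b) := rfl

lemma R2_entry (X Y : Matrix (Fin 4) (Fin 4) ℂ) (a b : Fin 16) :
    R2of (dSum X Y) a b = G X Y (u2 a) (u2 b) := by
  exact mul_comm ((1 : Matrix (Fin 2) (Fin 2) ℂ) _ _) _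

lemma v1_inl (a : Fin 16) (p : Fin 8)
    (h : (finSumFinEquiv (m := 8) (n := 8)).symm a = Sum.inl p) :
    v1 a = ((Sum.inl ((finProdFinEquiv (m := 4) (n := 2)).symm p).1 : S),
      ((finProdFinEquiv (m := 4) (n := 2)).symm p).2) := by
  simp only [v1, h, Sum.elim_inl]

lemma v1_inr (a : Fin 16) (p : Fin 8)
    (h : (finSumFinEquiv (m := 8) (n := 8)).symm a = Sum.inr p) :
    v1 a = ((Sum.inr ((finProdFinEquiv (m := 4) (n := 2)).symm p).1 : S),
      ((finProdFinEquiv (m := 4) (n := 2)).symm p).2) := by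
  simp only [v1, h, Sum.elim_inr]

lemma v2_inl (a : Fin 16) (p : Fin 8)
    (h : (finSumFinEquiv (m := 8) (n := 8)).symm a = Sum.inl p) :
    v2 a = ((finSumFinEquiv (m := 4) (n := 4)).symm p, (0 : Fin 2)) := by
  simp only [v2, h, Sum.elim_inl]

lemma v2_inr (a : Fin 16) (p : Fin 8)
    (h : (finSumFinEquiv (m := 8) (n := 8)).symm a = Sum.inr p) :
    v2 a = ((finSumFinEquiv (m := 4) (n := 4)).symm p, (1 : Fin 2)) := by
  simp only [v2, h, Sum.elim_inr]

lemma block1_entry (X Y : Matrix (Fin 4) (Fin 4) ℂ) (a b : Fin 16) :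
    (Matrix.reindex finSumFinEquiv finSumFinEquiv
        (Matrix.fromBlocks (kronI2 X) 0 0 (kronI2 Y))) a b = G X Y (v1 a) (v1 b) := by
  simp only [Matrix.reindex_apply, Matrix.submatrix_apply]
  rcases h : (finSumFinEquiv (m := 8) (n := 8)).symm a with p | p <;>
    rcases h' : (finSumFinEquiv (m := 8) (n := 8)).symm b with q | q
  · rw [v1_inl a p h, v1_inl b q h']; simp [G, kronI2]
  · rw [v1_inl a p h, v1_inr b q h']; simp [G]
  · rw [v1_inr a p h, v1_inl b q h']; simp [G]
  · rw [v1_inr a p h, v1_inr b q h']; simp [G, kronI2]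

lemma block2_entry (X Y : Matrix (Fin 4) (Fin 4) ℂ) (a b : Fin 16) :
    (Matrix.reindex finSumFinEquiv finSumFinEquiv
        (Matrix.fromBlocks (dSum X Y) 0 0 (dSum X Y))) a b = G X Y (v2 a) (v2 b) := by
  simp only [Matrix.reindex_apply, Matrix.submatrix_apply]
  rcases h : (finSumFinEquiv (m := 8) (n := 8)).symm a with p | p <;>
    rcases h' : (finSumFinEquiv (m := 8) (n := 8)).symm b with q | q
  · rw [v2_inl a p h, v2_inl b q h']; simp [G, dSum]
  · rw [v2_inl a p h, v2_inr b q h']; simp [G, Matrix.one_apply]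
  · rw [v2_inr a p h, v2_inl b q h']; simp [G, Matrix.one_apply]
  · rw [v2_inr a p h, v2_inr b q h']; simp [G, dSum]

lemma R1_eq (X Y : Matrix (Fin 4) (Fin 4) ℂ) :
    R1of (dSum X Y) = Matrix.reindex finSumFinEquiv finSumFinEquiv
        (Matrix.fromBlocks (kronI2 X) 0 0 (kronI2 Y)) := by
  ext a b
  rw [R1_entry, block1_entry, u1_eq_v1]

lemma R2_eq (X Y : Matrix (Fin 4) (Fin 4) ℂ) :
    R2of (dSum X Y) = Matrix.reindex finSumFinEquiv finSumFinEquiv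
        (Matrix.fromBlocks (dSum X Y) 0 0 (dSum X Y)) := by
  ext a b
  rw [R2_entry, block2_entry, u2_eq_v2]

lemma reindex_mul {n m : Type*} [Fintype n] [Fintype m] [DecidableEq n] [DecidableEq m]
    (e : n ≃ m) (A B : Matrix n n ℂ) :
    Matrix.reindex e e A * Matrix.reindex e e B = Matrix.reindex e e (A * B) := by
  simp only [Matrix.reindex_apply]
  exact Matrix.submatrix_mul_equiv A B _ _ _

end GYBEAux

theorem gYBE_block_characterization (X Y : Matrix (Fin 4) (Fin 4) ℂ) :
    gYBE231 (dSum X Y) ↔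
      (kronI2 X * dSum X Y * kronI2 X = dSum X Y * kronI2 X * dSum X Y ∧
       kronI2 Y * dSum X Y * kronI2 Y = dSum X Y * kronI2 Y * dSum X Y) := by
  rw [gYBE231, GYBEAux.R1_eq, GYBEAux.R2_eq]
  rw [GYBEAux.reindex_mul, GYBEAux.reindex_mul, GYBEAux.reindex_mul, GYBEAux.reindex_mul]
  rw [Equiv.apply_eq_iff_eq]
  simp [Matrix.fromBlocks_multiply, Matrix.fromBlocks_inj]
end

section
/- Let ω, γ, δ be complex numbers of modulus 1 satisfying: (i) (δ−1)ω² + (1+δ²−δγ+γ)ω − 2γ = 0; (ii) (δ−1)γ = δ² − 1 + ω(1−δ); (iii) ω + conj(ω) + γ + conj(γ) = ωγ + conj(ω)conj(γ) + 2; (iv) ω + conj(ω) + δ + conj(δ) = ωδ + conj(ω)conj(δ) + 2; (v) 1 + ω + conj(ω) + ωγ = γ + conj(γ) + ω² + ω·conj(γ); (vi) 2 + ωδ = δ + conj(δ) + ω·conj(δ); (vii) ω + conj(ω) + γ + conj(γ) + ω·conj(γ) + conj(ω)·γ = 4 + ω² + conj(ω)²; (viii) δ + conj(δ) + conj(ω)·δ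 + ω·conj(δ) = 2 + ω + conj(ω). Then (ω, γ, δ) is one of the following five triples: (i, i, 1), (−i, −i, 1), (i, 1, i), (−i, 1, −i), or (1, 1, 1). -/
open Complex

theorem unitary_Y_classification (ω γ δ : ℂ)
    (hω : ‖ω‖ = 1) (hγ : ‖γ‖ = 1) (hδ : ‖δ‖ = 1)
    (h1 : (δ - 1) * ω ^ 2 + (1 + δ ^ 2 - δ * γ + γ) * ω - 2 * γ = 0)
    (h2 : (δ - 1) * γ = δ ^ 2 - 1 + ω * (1 - δ))
    (h3 : ω + star ω + γ + star γ = ω * γ + star ω * star γ + 2)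
    (h4 : ω + star ω + δ + star δ = ω * δ + star ω * star δ + 2)
    (h5 : 1 + ω + star ω + ω * γ = γ + star γ + ω ^ 2 + ω * star γ)
    (h6 : 2 + ω * δ = δ + star δ + ω * star δ)
    (h7 : ω + star ω + γ + star γ + ω * star γ + star ω * γ = 4 + ω ^ 2 + (star ω) ^ 2)
    (h8 : δ + star δ + star ω * δ + ω * star δ = 2 + ω + star ω) :
    (ω, γ, δ) = (I, I, 1) ∨ (ω, γ, δ) = (-I, -I, 1) ∨
      (ω, γ, δ) = (I, 1, I) ∨ (ω, γ, δ) = (-I, 1, -I) ∨ (ω, γ, δ) = (1, 1, 1) := by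
  have hω0 : ω ≠ 0 := by intro h; simp [h] at hω
  have hδ0 : δ ≠ 0 := by intro h; simp [h] at hδ
  have hw1 : ω * star ω = 1 := by
    rw [RCLike.star_def, Complex.mul_conj, Complex.normSq_eq_norm_sq, hω]; norm_num
  have hd1 : δ * star δ = 1 := by
    rw [RCLike.star_def, Complex.mul_conj, Complex.normSq_eq_norm_sq, hδ]; norm_num
  have hu : star ω = ω⁻¹ := eq_inv_of_mul_eq_one_left (by linear_combination hw1)
  have hd : star δ = δ⁻¹ := eq_inv_of_mul_eq_one_left (by linear_combination hd1)
  by_cases hδeq : δ = 1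
  · -- case δ = 1
    subst hδeq
    have hγω : γ = ω := by linear_combination -h1 / 2
    rw [hγω, hu] at h7
    field_simp at h7
    have hq : (ω - 1) ^ 2 * (ω ^ 2 + 1) = 0 := by
      apply mul_left_cancel₀ hω0
      rw [mul_zero]
      linear_combination -ω * h7
    rcases mul_eq_zero.mp hq with h | h
    · have : ω = 1 := by
        have := pow_eq_zero_iff (n := 2) (by norm_num) |>.mp h
        linear_combination this
      right; right; right; right; simp [this, hγω.trans this]
    · have : (ω - I) * (ω + I) = 0 := by linear_combination h - Complex.I_sq
      rcases mul_eq_zero.mp this with h' | h'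
      · left
        have h2 : ω = I := sub_eq_zero.mp h'
        simp [h2, hγω.trans h2]
      · right; left
        have h2 : ω = -I := by linear_combination h'
        simp [h2, hγω.trans h2]
  · -- case δ ≠ 1
    have hδne : δ - 1 ≠ 0 := sub_ne_zero.mpr hδeq
    rw [hd] at h6
    field_simp at h6
    -- from h6 : ω (δ+1)(δ-1) = (δ-1)²
    have he : ω * (δ + 1) = δ - 1 := by
      apply mul_right_cancel₀ hδne
      linear_combination h6
    have he2 := congrArg (starRingEnd ℂ) he
    simp only [map_mul, map_add, map_sub, map_one] at he2
    rw [RCLike.star_def] at hu hd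
    rw [hu, hd] at he2
    field_simp at he2
    have he2' : ω * (1 - δ) = 1 + δ := by
      apply mul_right_cancel₀ hδ0
      linear_combination -δ * he2
    have hωδ : ω = δ := by linear_combination (he + he2') / 2
    have hδ2 : δ ^ 2 = -1 := by linear_combination (he - he2') / 2 - δ * hωδ
    have hγ1 : γ = 1 := by
      apply mul_left_cancel₀ hδne
      rw [h2]
      linear_combination (1 - δ) * hωδ
    subst hγ1
    subst hωδ
    have hq : (ω - I) * (ω + I) = 0 := by linear_combination hδ2 - Complex.I_sq
    rcases mul_eq_zero.mp hq with h' | h'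
    · right; right; left
      have h'' : ω = I := sub_eq_zero.mp h'
      simp [h'']
    · right; right; right; left
      have h'' : ω = -I := by linear_combination h'
      simp [h'']
end

section
/- Consider the three unitary (2,3,1)-R-matrices R = X ⊕ Y given by: (1) X = (1/√2)·[[1,0,1,0],[0,i,0,1],[−i,0,i,0],[0,−i,0,1]], Y = (1/√2)·[[i,0,1,0],[0,1,0,−1],[−i,0,1,0],[0,i,0,i]]; (2) X = (1/√2)·[[1,0,1,0],[0,i,0,1],[−1,0,1,0],[0,1,0,i]], Y = (1/√2)·[[i,0,1,0],[0,1,0,−1],[1,0,i,0],[0,1,0,1]]; (3) X = (1/√2)·[[1,0,1,0],[0,1,0,1],[−1,0,1,0],[0,−1,0,1]], Y = (1/√2)·[[1,0,−1,0],[0,1,0,−1],[1,0,1,0],[0,1,0,1]]. In each case, Y = P†·X·P where P is respectively the 4×4 matrix [[0,0,i,0],[0,0,0,−i],[1,0,0,0],[0,1,0,0]] for case (1), [[0,0,0,1],[0,0,1,0],[0,1,0,0],[1,0,0,0]] for case (2), and [[0,0,1,0],[0,0,0,1],[1,0,0,0],[0,1,0,0]] for case (3); in particular X and Y are conjugate (similar)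 in each case. -/
open Matrix Complex

theorem XY_conjugate_three_families :
    ((Real.sqrt 2 : ℂ)⁻¹ • !![I, 0, 1, 0;
        0, 1, 0, -1;
        -I, 0, 1, 0;
        0, I, 0, I] =
      (!![0, 0, I, 0;
          0, 0, 0, -I;
          1, 0, 0, 0;
          0, 1, 0, 0])ᴴ *
        ((Real.sqrt 2 : ℂ)⁻¹ • !![1, 0, 1, 0;
          0, I, 0, 1;
          -I, 0, I, 0;
          0, -I, 0, 1]) *
        !![0, 0, I, 0;
          0, 0, 0, -I;
          1, 0, 0, 0;
          0, 1, 0, 0]) ∧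
    ((Real.sqrt 2 : ℂ)⁻¹ • !![I, 0, 1, 0;
        0, 1, 0, -1;
        1, 0, I, 0;
        0, 1, 0, 1] =
      (!![0, 0, 0, 1;
          0, 0, 1, 0;
          0, 1, 0, 0;
          1, 0, 0, 0])ᴴ *
        ((Real.sqrt 2 : ℂ)⁻¹ • !![1, 0, 1, 0;
          0, I, 0, 1;
          -1, 0, 1, 0;
          0, 1, 0, I]) *
        !![0, 0, 0, 1;
          0, 0, 1, 0;
          0, 1, 0, 0;
          1, 0, 0, 0]) ∧
    ((Real.sqrt 2 : ℂ)⁻¹ • (!![1, 0, -1, 0;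
        0, 1, 0, -1;
        1, 0, 1, 0;
        0, 1, 0, 1] : Matrix (Fin 4) (Fin 4) ℂ) =
      (!![0, 0, 1, 0;
          0, 0, 0, 1;
          1, 0, 0, 0;
          0, 1, 0, 0] : Matrix (Fin 4) (Fin 4) ℂ)ᴴ *
        ((Real.sqrt 2 : ℂ)⁻¹ • (!![1, 0, 1, 0;
          0, 1, 0, 1;
          -1, 0, 1, 0;
          0, -1, 0, 1] : Matrix (Fin 4) (Fin 4) ℂ)) *
        (!![0, 0, 1, 0;
          0, 0, 0, 1;
          1, 0, 0, 0;
          0, 1, 0, 0] : Matrix (Fin 4) (Fin 4) ℂ)) := by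
  refine ⟨?_, ?_, ?_⟩ <;>
  · ext i j
    fin_cases i <;> fin_cases j <;>
      simp [Matrix.mul_apply, Fin.sum_univ_succ, Matrix.conjTranspose_apply] <;>
      simp [Complex.ext_iff]
end

section
/- For complex numbers α, β, α', β' of modulus 1, let R(α,β) = X(α,β) ⊕ Y(α,β) be the first-family solution, where X(α,β) = (1/√2)·[[1,0,α,0],[0,i,0,β],[−i·conj(α),0,i,0],[0,−i·conj(β),0,1]] and Y(α,β) = (1/√2)·[[i,0,β,0],[0,1,0,−conj(α)·β²],[−i·conj(β),0,1,0],[0,i·α·conj(β)²,0,i]]. Then there exists an invertible 2×2 complex matrix Q such that R(α,β) = (Q⁻¹ ⊗ Q⁻¹ ⊗ Q⁻¹)·R(α',β')·(Q ⊗ Q ⊗ Q) (with ⊗ the Kronecker product) if and only if β·conj(α) = β'·conj(α') (i.e., β/α = β'/α'). -/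
open Matrix Complex
open scoped Kronecker

/-- The triple Kronecker product `Q ⊗ Q ⊗ Q`, reindexed as an 8×8 matrix. -/
noncomputable def kron3 (Q : Matrix (Fin 2) (Fin 2) ℂ) : Matrix (Fin 8) (Fin 8) ℂ :=
  Matrix.reindex ((Equiv.prodCongr finProdFinEquiv (Equiv.refl (Fin 2))).trans finProdFinEquiv)
    ((Equiv.prodCongr finProdFinEquiv (Equiv.refl (Fin 2))).trans finProdFinEquiv)
    ((Q ⊗ₖ Q) ⊗ₖ Q)

/-- The first-family solution `R(α,β) = X(α,β) ⊕ Y(α,β)`. -/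
noncomputable def Rfirst (α β : ℂ) : Matrix (Fin 8) (Fin 8) ℂ :=
  dSum
    ((Real.sqrt 2 : ℂ)⁻¹ • !![1, 0, α, 0;
      0, I, 0, β;
      -(I * star α), 0, I, 0;
      0, -(I * star β), 0, 1])
    ((Real.sqrt 2 : ℂ)⁻¹ • !![I, 0, β, 0;
      0, 1, 0, -(star α * β ^ 2);
      -(I * star β), 0, 1, 0;
      0, I * α * (star β) ^ 2, 0, I])

noncomputable def Rm (a b sa sb : ℂ) : Matrix (Fin 8) (Fin 8) ℂ :=
  !![((Real.sqrt 2 : ℂ))⁻¹ * (1), ((Real.sqrt 2 : ℂ))⁻¹ * (0), ((Real.sqrt 2 : ℂ))⁻¹ * (a), ((Real.sqrt 2 : ℂ))⁻¹ * (0), 0, 0, 0, 0;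
    ((Real.sqrt 2 : ℂ))⁻¹ * (0), ((Real.sqrt 2 : ℂ))⁻¹ * (I), ((Real.sqrt 2 : ℂ))⁻¹ * (0), ((Real.sqrt 2 : ℂ))⁻¹ * (b), 0, 0, 0, 0;
    ((Real.sqrt 2 : ℂ))⁻¹ * (-(I * sa)), ((Real.sqrt 2 : ℂ))⁻¹ * (0), ((Real.sqrt 2 : ℂ))⁻¹ * (I), ((Real.sqrt 2 : ℂ))⁻¹ * (0), 0, 0, 0, 0;
    ((Real.sqrt 2 : ℂ))⁻¹ * (0), ((Real.sqrt 2 : ℂ))⁻¹ * (-(I * sb)), ((Real.sqrt 2 : ℂ))⁻¹ * (0), ((Real.sqrt 2 : ℂ))⁻¹ * (1), 0, 0, 0, 0;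
    0, 0, 0, 0, ((Real.sqrt 2 : ℂ))⁻¹ * (I), ((Real.sqrt 2 : ℂ))⁻¹ * (0), ((Real.sqrt 2 : ℂ))⁻¹ * (b), ((Real.sqrt 2 : ℂ))⁻¹ * (0);
    0, 0, 0, 0, ((Real.sqrt 2 : ℂ))⁻¹ * (0), ((Real.sqrt 2 : ℂ))⁻¹ * (1), ((Real.sqrt 2 : ℂ))⁻¹ * (0), ((Real.sqrt 2 : ℂ))⁻¹ * (-(sa * b ^ 2));
    0, 0, 0, 0, ((Real.sqrt 2 : ℂ))⁻¹ * (-(I * sb)), ((Real.sqrt 2 : ℂ))⁻¹ * (0), ((Real.sqrt 2 : ℂ))⁻¹ * (1), ((Real.sqrt 2 : ℂ))⁻¹ * (0);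
    0, 0, 0, 0, ((Real.sqrt 2 : ℂ))⁻¹ * (0), ((Real.sqrt 2 : ℂ))⁻¹ * (I * a * sb ^ 2), ((Real.sqrt 2 : ℂ))⁻¹ * (0), ((Real.sqrt 2 : ℂ))⁻¹ * (I)]

set_option maxHeartbeats 2000000 in
theorem Rfirst_eq (α β : ℂ) : Rfirst α β = Rm α β ((starRingEnd ℂ) α) ((starRingEnd ℂ) β) := by
  ext i j; fin_cases i <;> fin_cases j <;> rfl

set_option maxHeartbeats 2000000 in
theorem kron3_eq (Q : Matrix (Fin 2) (Fin 2) ℂ) : kron3 Q =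
    !![Q 0 0 * Q 0 0 * Q 0 0, Q 0 0 * Q 0 0 * Q 0 1, Q 0 0 * Q 0 1 * Q 0 0, Q 0 0 * Q 0 1 * Q 0 1, Q 0 1 * Q 0 0 * Q 0 0, Q 0 1 * Q 0 0 * Q 0 1, Q 0 1 * Q 0 1 * Q 0 0, Q 0 1 * Q 0 1 * Q 0 1;
    Q 0 0 * Q 0 0 * Q 1 0, Q 0 0 * Q 0 0 * Q 1 1, Q 0 0 * Q 0 1 * Q 1 0, Q 0 0 * Q 0 1 * Q 1 1, Q 0 1 * Q 0 0 * Q 1 0, Q 0 1 * Q 0 0 * Q 1 1, Q 0 1 * Q 0 1 * Q 1 0, Q 0 1 * Q 0 1 * Q 1 1;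
    Q 0 0 * Q 1 0 * Q 0 0, Q 0 0 * Q 1 0 * Q 0 1, Q 0 0 * Q 1 1 * Q 0 0, Q 0 0 * Q 1 1 * Q 0 1, Q 0 1 * Q 1 0 * Q 0 0, Q 0 1 * Q 1 0 * Q 0 1, Q 0 1 * Q 1 1 * Q 0 0, Q 0 1 * Q 1 1 * Q 0 1;
    Q 0 0 * Q 1 0 * Q 1 0, Q 0 0 * Q 1 0 * Q 1 1, Q 0 0 * Q 1 1 * Q 1 0, Q 0 0 * Q 1 1 * Q 1 1, Q 0 1 * Q 1 0 * Q 1 0, Q 0 1 * Q 1 0 * Q 1 1, Q 0 1 * Q 1 1 * Q 1 0, Q 0 1 * Q 1 1 * Q 1 1;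
    Q 1 0 * Q 0 0 * Q 0 0, Q 1 0 * Q 0 0 * Q 0 1, Q 1 0 * Q 0 1 * Q 0 0, Q 1 0 * Q 0 1 * Q 0 1, Q 1 1 * Q 0 0 * Q 0 0, Q 1 1 * Q 0 0 * Q 0 1, Q 1 1 * Q 0 1 * Q 0 0, Q 1 1 * Q 0 1 * Q 0 1;
    Q 1 0 * Q 0 0 * Q 1 0, Q 1 0 * Q 0 0 * Q 1 1, Q 1 0 * Q 0 1 * Q 1 0, Q 1 0 * Q 0 1 * Q 1 1, Q 1 1 * Q 0 0 * Q 1 0, Q 1 1 * Q 0 0 * Q 1 1, Q 1 1 * Q 0 1 * Q 1 0, Q 1 1 * Q 0 1 * Q 1 1;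
    Q 1 0 * Q 1 0 * Q 0 0, Q 1 0 * Q 1 0 * Q 0 1, Q 1 0 * Q 1 1 * Q 0 0, Q 1 0 * Q 1 1 * Q 0 1, Q 1 1 * Q 1 0 * Q 0 0, Q 1 1 * Q 1 0 * Q 0 1, Q 1 1 * Q 1 1 * Q 0 0, Q 1 1 * Q 1 1 * Q 0 1;
    Q 1 0 * Q 1 0 * Q 1 0, Q 1 0 * Q 1 0 * Q 1 1, Q 1 0 * Q 1 1 * Q 1 0, Q 1 0 * Q 1 1 * Q 1 1, Q 1 1 * Q 1 0 * Q 1 0, Q 1 1 * Q 1 0 * Q 1 1, Q 1 1 * Q 1 1 * Q 1 0, Q 1 1 * Q 1 1 * Q 1 1] := by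
  ext i j; fin_cases i <;> fin_cases j <;> rfl


@[simp] theorem cval_6_5 {γ : Type*} (x : γ) (u : Fin 5 → γ) :
    Matrix.vecCons x u (5 : Fin 6) = u 4 := rfl
@[simp] theorem cval_7_5 {γ : Type*} (x : γ) (u : Fin 6 → γ) :
    Matrix.vecCons x u (5 : Fin 7) = u 4 := rfl
@[simp] theorem cval_7_6 {γ : Type*} (x : γ) (u : Fin 6 → γ) :
    Matrix.vecCons x u (6 : Fin 7) = u 5 := rfl
@[simp] theorem cval_8_5 {γ : Type*} (x : γ) (u : Fin 7 → γ) :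
    Matrix.vecCons x u (5 : Fin 8) = u 4 := rfl
@[simp] theorem cval_8_6 {γ : Type*} (x : γ) (u : Fin 7 → γ) :
    Matrix.vecCons x u (6 : Fin 8) = u 5 := rfl
@[simp] theorem cval_8_7 {γ : Type*} (x : γ) (u : Fin 7 → γ) :
    Matrix.vecCons x u (7 : Fin 8) = u 6 := rfl
@[simp] theorem vec8_5 {γ : Type*} (a0 a1 a2 a3 a4 a5 a6 a7 : γ) : ![a0,a1,a2,a3,a4,a5,a6,a7] 5 = a5 := rfl
@[simp] theorem vec8_6 {γ : Type*} (a0 a1 a2 a3 a4 a5 a6 a7 : γ) : ![a0,a1,a2,a3,a4,a5,a6,a7] 6 = a6 := rfl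
@[simp] theorem vec8_7 {γ : Type*} (a0 a1 a2 a3 a4 a5 a6 a7 : γ) : ![a0,a1,a2,a3,a4,a5,a6,a7] 7 = a7 := rfl

set_option maxHeartbeats 4000000 in
theorem back_lemma (a b a' b' sa sb sa' sb' t : ℂ) (h1 : a' * t = a) (h2 : b' * t = b)
    (h3 : sa * t = sa') (h4 : sb * t = sb') :
    kron3 !![1, 0; 0, t] * Rm a b sa sb = Rm a' b' sa' sb' * kron3 !![1, 0; 0, t] := by
  rw [kron3_eq]
  ext i j
  fin_cases i <;> fin_cases j <;>
    simp [Matrix.mul_apply, Fin.sum_univ_succ, Rm] <;>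
    first
      | ring1
      | (simp only [← h1, ← h2, ← h3, ← h4]; ring1)

theorem kron3_mul (A B : Matrix (Fin 2) (Fin 2) ℂ) : kron3 A * kron3 B = kron3 (A * B) := by
  unfold kron3
  rw [Matrix.reindex_apply, Matrix.reindex_apply, Matrix.reindex_apply,
    Matrix.submatrix_mul_equiv, ← Matrix.mul_kronecker_mul, ← Matrix.mul_kronecker_mul]

theorem kron3_one : kron3 (1 : Matrix (Fin 2) (Fin 2) ℂ) = 1 := by
  unfold kron3
  rw [Matrix.one_kronecker_one, Matrix.one_kronecker_one, Matrix.reindex_apply,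
    Matrix.submatrix_one_equiv]

set_option maxHeartbeats 4000000 in
theorem first_family_local_conjugacy (α β α' β' : ℂ)
    (hα : ‖α‖ = 1) (hβ : ‖β‖ = 1)
    (hα' : ‖α'‖ = 1) (hβ' : ‖β'‖ = 1) :
    (∃ Q : Matrix (Fin 2) (Fin 2) ℂ, IsUnit Q ∧
        Rfirst α β = kron3 Q⁻¹ * Rfirst α' β' * kron3 Q) ↔
      β * star α = β' * star α' := by
  have hsq : ((Real.sqrt 2 : ℝ) : ℂ) ≠ 0 :=
    Complex.ofReal_ne_zero.2 (Real.sqrt_pos.2 (by norm_num)).ne'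
  have hc : ((Real.sqrt 2 : ℂ))⁻¹ ≠ 0 := inv_ne_zero hsq
  have hI1 : (1 - Complex.I : ℂ) ≠ 0 := fun hh => by simpa using congrArg Complex.im hh
  have hI1' : (Complex.I - 1 : ℂ) ≠ 0 := fun hh => by simpa using congrArg Complex.im hh
  have hαne : α ≠ 0 := by intro hh; rw [hh] at hα; simp at hα
  have hβne : β ≠ 0 := by intro hh; rw [hh] at hβ; simp at hβ
  have hα'ne : α' ≠ 0 := by intro hh; rw [hh] at hα'; simp at hα'
  have hβ'ne : β' ≠ 0 := by intro hh; rw [hh] at hβ'; simp at hβ'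
  have hSAne : (starRingEnd ℂ) α ≠ 0 :=
    fun hh => hαne (by simpa using congrArg (starRingEnd ℂ) hh)
  have hSA'ne : (starRingEnd ℂ) α' ≠ 0 :=
    fun hh => hα'ne (by simpa using congrArg (starRingEnd ℂ) hh)
  have hSBne : (starRingEnd ℂ) β ≠ 0 :=
    fun hh => hβne (by simpa using congrArg (starRingEnd ℂ) hh)
  have huα : α * (starRingEnd ℂ) α = 1 := by
    rw [Complex.mul_conj, Complex.normSq_eq_norm_sq, hα]; norm_num
  have huβ : β * (starRingEnd ℂ) β = 1 := by
    rw [Complex.mul_conj, Complex.normSq_eq_norm_sq, hβ]; norm_num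
  have huα' : α' * (starRingEnd ℂ) α' = 1 := by
    rw [Complex.mul_conj, Complex.normSq_eq_norm_sq, hα']; norm_num
  have huβ' : β' * (starRingEnd ℂ) β' = 1 := by
    rw [Complex.mul_conj, Complex.normSq_eq_norm_sq, hβ']; norm_num
  rw [show (star α) = (starRingEnd ℂ) α from rfl, show (star α') = (starRingEnd ℂ) α' from rfl]
  constructor
  · rintro ⟨Q, hQ, hconj⟩
    have hdQ : IsUnit Q.det := (Matrix.isUnit_iff_isUnit_det Q).1 hQ
    have h : kron3 Q * Rfirst α β = Rfirst α' β' * kron3 Q := by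
      rw [hconj, ← Matrix.mul_assoc, ← Matrix.mul_assoc, kron3_mul,
        Matrix.mul_nonsing_inv Q hdQ, kron3_one, Matrix.one_mul]
    have hdet : Q 0 0 * Q 1 1 - Q 0 1 * Q 1 0 ≠ 0 := by
      have h2 : Q.det ≠ 0 := hdQ.ne_zero
      rwa [Matrix.det_fin_two] at h2
    rw [Rfirst_eq, Rfirst_eq, kron3_eq] at h
    have e00 := Matrix.ext_iff.2 h 0 0
    have e04 := Matrix.ext_iff.2 h 0 4
    have e20 := Matrix.ext_iff.2 h 2 0
    have e24 := Matrix.ext_iff.2 h 2 4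
    have e02 := Matrix.ext_iff.2 h 0 2
    have e40 := Matrix.ext_iff.2 h 4 0
    have e42 := Matrix.ext_iff.2 h 4 2
    have e15 := Matrix.ext_iff.2 h 1 (Fin.succ (4 : Fin 7))
    have e17 := Matrix.ext_iff.2 h 1 (Fin.succ (Fin.succ (Fin.succ (4 : Fin 5))))
    have e55 := Matrix.ext_iff.2 h (Fin.succ (4 : Fin 7)) (Fin.succ (4 : Fin 7))
    have e57 := Matrix.ext_iff.2 h (Fin.succ (4 : Fin 7)) (Fin.succ (Fin.succ (Fin.succ (4 : Fin 5))))
    have e31 := Matrix.ext_iff.2 h 3 1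
    have e52 := Matrix.ext_iff.2 h (Fin.succ (4 : Fin 7)) 2
    clear h
    simp [Rm, Matrix.mul_apply, Fin.sum_univ_succ, Matrix.cons_val_succ, Matrix.cons_val_four]
      at e00 e04 e20 e24 e02 e40 e42 e15 e17 e55 e57 e31 e52
    by_cases hp : Q 0 0 = 0
    · have hq : Q 0 1 ≠ 0 := by intro hh; rw [hp, hh] at hdet; simp at hdet
      have hr : Q 1 0 ≠ 0 := by intro hh; rw [hp, hh] at hdet; simp at hdet
      by_cases hs : Q 1 1 = 0
      · exfalso
        have hz : (Complex.I - 1) * (((Real.sqrt 2 : ℂ))⁻¹ * (Q 0 1 * Q 1 0 ^ 2)) = 0 := by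
          linear_combination e52 - ((Real.sqrt 2 : ℂ))⁻¹ * α * Q 1 0 ^ 2 * hp
            - ((Real.sqrt 2 : ℂ))⁻¹ * (starRingEnd ℂ) α' * β' ^ 2 * Q 1 0 ^ 2 * hs
        exact (mul_ne_zero hI1' (mul_ne_zero hc
          (mul_ne_zero hq (pow_ne_zero 2 hr)))) hz
      · exfalso
        have hqs : ((Real.sqrt 2 : ℂ))⁻¹ * (Q 0 1 * Q 1 1) ≠ 0 :=
          mul_ne_zero hc (mul_ne_zero hq hs)
        have hss : ((Real.sqrt 2 : ℂ))⁻¹ * (Q 1 1 * Q 1 1) ≠ 0 :=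
          mul_ne_zero hc (mul_ne_zero hs hs)
        have G1 : Q 0 0 + Q 0 1 * (Complex.I * α * (starRingEnd ℂ) β ^ 2)
            = Complex.I * Q 0 0 + β' * Q 1 0 :=
          mul_left_cancel₀ hqs (by linear_combination e15)
        have G2 : Q 0 0 + Q 0 1 * (Complex.I * α * (starRingEnd ℂ) β ^ 2)
            = Q 0 0 - (starRingEnd ℂ) α' * β' ^ 2 * Q 1 0 :=
          mul_left_cancel₀ hss (by linear_combination e55)
        have G3 : -((starRingEnd ℂ) α * β ^ 2) * Q 0 0 + Complex.I * Q 0 1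
            = Complex.I * Q 0 1 + β' * Q 1 1 :=
          mul_left_cancel₀ hqs (by linear_combination e17)
        have G4 : -((starRingEnd ℂ) α * β ^ 2) * Q 0 0 + Complex.I * Q 0 1
            = Q 0 1 - (starRingEnd ℂ) α' * β' ^ 2 * Q 1 1 :=
          mul_left_cancel₀ hss (by linear_combination e57)
        have hz : (1 - Complex.I) * (Q 0 0 * Q 1 1 - Q 0 1 * Q 1 0) = 0 := by
          linear_combination Q 1 1 * G1 - Q 1 1 * G2 - Q 1 0 * G3 + Q 1 0 * G4
        exact (mul_ne_zero hI1 hdet) hz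
    · have hpp : ((Real.sqrt 2 : ℂ))⁻¹ * (Q 0 0 * Q 0 0) ≠ 0 :=
        mul_ne_zero hc (mul_ne_zero hp hp)
      have hq0 : Q 0 1 = 0 := by
        by_contra hq
        have hqp : ((Real.sqrt 2 : ℂ))⁻¹ * (Q 0 1 * Q 0 0) ≠ 0 :=
          mul_ne_zero hc (mul_ne_zero hq hp)
        have A1 : Q 0 0 - Complex.I * (starRingEnd ℂ) α * Q 0 1 = Q 0 0 + α' * Q 1 0 :=
          mul_left_cancel₀ hpp (by linear_combination e00)
        have A2 : Complex.I * Q 0 0 - Complex.I * (starRingEnd ℂ) β * Q 0 1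
            = Q 0 0 + α' * Q 1 0 :=
          mul_left_cancel₀ hqp (by linear_combination e04)
        have A3 : Q 1 0 - Complex.I * (starRingEnd ℂ) α * Q 1 1
            = -(Complex.I * (starRingEnd ℂ) α' * Q 0 0) + Complex.I * Q 1 0 :=
          mul_left_cancel₀ hpp (by linear_combination e20)
        have A4 : Complex.I * Q 1 0 - Complex.I * (starRingEnd ℂ) β * Q 1 1
            = -(Complex.I * (starRingEnd ℂ) α' * Q 0 0) + Complex.I * Q 1 0 :=
          mul_left_cancel₀ hqp (by linear_combination e24)
        have hz : (1 - Complex.I) ^ 2 * (Q 0 0 * Q 1 1 - Q 0 1 * Q 1 0) = 0 := by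
          linear_combination ((1 - Complex.I) * Q 1 1) * A1 - ((1 - Complex.I) * Q 1 1) * A2
            - ((1 - Complex.I) * Q 0 1) * A3 + ((1 - Complex.I) * Q 0 1) * A4
        exact (mul_ne_zero (pow_ne_zero 2 hI1) hdet) hz
      have hr0 : Q 1 0 = 0 := by
        by_contra hr
        have hrp : ((Real.sqrt 2 : ℂ))⁻¹ * (Q 1 0 * Q 0 0) ≠ 0 :=
          mul_ne_zero hc (mul_ne_zero hr hp)
        have C1 : Q 0 0 - Complex.I * (starRingEnd ℂ) α * Q 0 1 = Q 0 0 + α' * Q 1 0 :=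
          mul_left_cancel₀ hpp (by linear_combination e00)
        have C2 : Q 0 0 - Complex.I * (starRingEnd ℂ) α * Q 0 1
            = Complex.I * Q 0 0 + β' * Q 1 0 :=
          mul_left_cancel₀ hrp (by linear_combination e40)
        have C3 : α * Q 0 0 + Complex.I * Q 0 1 = Q 0 1 + α' * Q 1 1 :=
          mul_left_cancel₀ hpp (by linear_combination e02)
        have C4 : α * Q 0 0 + Complex.I * Q 0 1 = Complex.I * Q 0 1 + β' * Q 1 1 :=
          mul_left_cancel₀ hrp (by linear_combination e42)
        have hz : (1 - Complex.I) * (Q 0 0 * Q 1 1 - Q 0 1 * Q 1 0) = 0 := by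
          linear_combination -(Q 1 1 * C1) + Q 1 1 * C2 + Q 1 0 * C3 - Q 1 0 * C4
        exact (mul_ne_zero hI1 hdet) hz
      have hs : Q 1 1 ≠ 0 := by intro hh; rw [hq0, hh] at hdet; simp at hdet
      have hips : ((Real.sqrt 2 : ℂ))⁻¹ * Complex.I * (Q 0 0 * Q 1 1) ≠ 0 :=
        mul_ne_zero (mul_ne_zero hc Complex.I_ne_zero) (mul_ne_zero hp hs)
      have F1 : α * Q 0 0 = α' * Q 1 1 :=
        mul_left_cancel₀ hpp (by
          linear_combination e02 + ((Real.sqrt 2 : ℂ))⁻¹ * (1 - Complex.I) * Q 0 0 ^ 2 * hq0)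
      have F2 : (starRingEnd ℂ) β * Q 1 1 = (starRingEnd ℂ) β' * Q 0 0 :=
        mul_left_cancel₀ hips (by
          linear_combination -e31 + ((Real.sqrt 2 : ℂ))⁻¹ * (Complex.I - 1) * Q 0 0 * Q 1 1 * hr0)
      have hps : Q 0 0 * Q 1 1 ≠ 0 := mul_ne_zero hp hs
      have key : α * (starRingEnd ℂ) β = α' * (starRingEnd ℂ) β' :=
        mul_left_cancel₀ hps (by
          linear_combination ((starRingEnd ℂ) β * Q 1 1) * F1 + (α' * Q 1 1) * F2)
      have m1 : (β * (starRingEnd ℂ) α) * (α * (starRingEnd ℂ) β) = 1 := by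
        linear_combination (β * (starRingEnd ℂ) β) * huα + huβ
      have m2 : (β' * (starRingEnd ℂ) α') * (α' * (starRingEnd ℂ) β') = 1 := by
        linear_combination (β' * (starRingEnd ℂ) β') * huα' + huβ'
      have hfin : (α * (starRingEnd ℂ) β) *
          (β * (starRingEnd ℂ) α - β' * (starRingEnd ℂ) α') = 0 := by
        linear_combination m1 - m2 - (β' * (starRingEnd ℂ) α') * key
      exact sub_eq_zero.1 ((mul_eq_zero.1 hfin).resolve_left (mul_ne_zero hαne hSBne))
  · intro hu
    have h1 : α' * (α * (starRingEnd ℂ) α') = α := by linear_combination α * huα'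
    have h2 : β' * (α * (starRingEnd ℂ) α') = β := by linear_combination -α * hu + β * huα
    have h3 : (starRingEnd ℂ) α * (α * (starRingEnd ℂ) α') = (starRingEnd ℂ) α' := by
      linear_combination (starRingEnd ℂ) α' * huα
    have hc2 : (starRingEnd ℂ) β' * ((starRingEnd ℂ) α * α') = (starRingEnd ℂ) β := by
      have h5 := congrArg (starRingEnd ℂ) h2
      simp only [_root_.map_mul, Complex.conj_conj] at h5
      linear_combination h5
    have h4 : (starRingEnd ℂ) β * (α * (starRingEnd ℂ) α') = (starRingEnd ℂ) β' := by
      linear_combination -(α * (starRingEnd ℂ) α') * hc2 +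
        (starRingEnd ℂ) β' * (starRingEnd ℂ) α * h1 + (starRingEnd ℂ) β' * huα
    have htne : α * (starRingEnd ℂ) α' ≠ 0 := mul_ne_zero hαne hSA'ne
    have hdetQ : (!![1, 0; 0, α * (starRingEnd ℂ) α'] : Matrix (Fin 2) (Fin 2) ℂ).det
        = α * (starRingEnd ℂ) α' := by rw [Matrix.det_fin_two_of]; ring
    have hQu : IsUnit (!![1, 0; 0, α * (starRingEnd ℂ) α'] : Matrix (Fin 2) (Fin 2) ℂ).det := by
      rw [hdetQ]; exact isUnit_iff_ne_zero.2 htne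
    refine ⟨!![1, 0; 0, α * (starRingEnd ℂ) α'], (Matrix.isUnit_iff_isUnit_det _).2 hQu, ?_⟩
    have hKR := back_lemma α β α' β' ((starRingEnd ℂ) α) ((starRingEnd ℂ) β)
      ((starRingEnd ℂ) α') ((starRingEnd ℂ) β') (α * (starRingEnd ℂ) α') h1 h2 h3 h4
    have hinv : kron3 (!![1, 0; 0, α * (starRingEnd ℂ) α'])⁻¹ *
        kron3 !![1, 0; 0, α * (starRingEnd ℂ) α'] = 1 := by
      rw [kron3_mul, Matrix.nonsing_inv_mul _ hQu, kron3_one]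
    rw [Rfirst_eq, Rfirst_eq]
    calc Rm α β ((starRingEnd ℂ) α) ((starRingEnd ℂ) β)
        = (kron3 (!![1, 0; 0, α * (starRingEnd ℂ) α'])⁻¹ *
            kron3 !![1, 0; 0, α * (starRingEnd ℂ) α']) *
          Rm α β ((starRingEnd ℂ) α) ((starRingEnd ℂ) β) := by rw [hinv, Matrix.one_mul]
      _ = kron3 (!![1, 0; 0, α * (starRingEnd ℂ) α'])⁻¹ *
          (kron3 !![1, 0; 0, α * (starRingEnd ℂ) α'] *
            Rm α β ((starRingEnd ℂ) α) ((starRingEnd ℂ) β)) := by rw [Matrix.mul_assoc]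
      _ = kron3 (!![1, 0; 0, α * (starRingEnd ℂ) α'])⁻¹ *
          (Rm α' β' ((starRingEnd ℂ) α') ((starRingEnd ℂ) β') *
            kron3 !![1, 0; 0, α * (starRingEnd ℂ) α']) := by rw [hKR]
      _ = kron3 (!![1, 0; 0, α * (starRingEnd ℂ) α'])⁻¹ *
          Rm α' β' ((starRingEnd ℂ) α') ((starRingEnd ℂ) β') *
          kron3 !![1, 0; 0, α * (starRingEnd ℂ) α'] := by rw [Matrix.mul_assoc]
end

section
/- The 4×4 matrix X = (1/√2)·[[1,0,1,0],[0,1,0,−1],[−1,0,1,0],[0,1,0,1]] is unitary and satisfies the Yang–Baxter equation in dimension 2; that is, (X ⊗ I₂)(I₂ ⊗ X)(X ⊗ I₂) = (I₂ ⊗ X)(X ⊗ I₂)(I₂ ⊗ X) as 8×8 matrices. (This is the common block X(π) = Y(π) of the third family of solutions at θ = π.) -/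
open Matrix Complex
open scoped Kronecker

def Mbb : Matrix (Fin 4) (Fin 4) ℂ := !![1, 0, 1, 0; 0, 1, 0, -1; -1, 0, 1, 0; 0, 1, 0, 1]

def Aint : Matrix (Fin 8) (Fin 8) ℤ := !![1, 0, 0, 0, 1, 0, 0, 0;
    0, 1, 0, 0, 0, 1, 0, 0;
    0, 0, 1, 0, 0, 0, -1, 0;
    0, 0, 0, 1, 0, 0, 0, -1;
    -1, 0, 0, 0, 1, 0, 0, 0;
    0, -1, 0, 0, 0, 1, 0, 0;
    0, 0, 1, 0, 0, 0, 1, 0;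
    0, 0, 0, 1, 0, 0, 0, 1]

def Bint : Matrix (Fin 8) (Fin 8) ℤ := !![1, 0, 1, 0, 0, 0, 0, 0;
    0, 1, 0, -1, 0, 0, 0, 0;
    -1, 0, 1, 0, 0, 0, 0, 0;
    0, 1, 0, 1, 0, 0, 0, 0;
    0, 0, 0, 0, 1, 0, 1, 0;
    0, 0, 0, 0, 0, 1, 0, -1;
    0, 0, 0, 0, -1, 0, 1, 0;
    0, 0, 0, 0, 0, 1, 0, 1]

noncomputable def Abb : Matrix (Fin 8) (Fin 8) ℂ := Aint.map (Int.castRingHom ℂ)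
noncomputable def Bbb : Matrix (Fin 8) (Fin 8) ℂ := Bint.map (Int.castRingHom ℂ)

set_option maxHeartbeats 2000000 in
lemma hX1bb : X1of Mbb = Abb := by
  ext i j
  fin_cases i <;> fin_cases j <;>
    simp [X1of, Mbb, Abb, Aint, Matrix.map_apply, Matrix.kroneckerMap_apply, Matrix.one_apply,
      finProdFinEquiv, Fin.divNat, Fin.modNat, Fin.ext_iff] <;>
    first
      | rfl
      | (intro _; rfl)
      | (intro h; exact absurd h (by decide))
      | exact (by norm_num : ((0:ℤ):ℂ) = 0).symm
      | exact (by norm_num : ((1:ℤ):ℂ) = 1).symm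
      | exact (by norm_num : ((-1:ℤ):ℂ) = -1).symm
      | (intro _; exact (by norm_num : ((0:ℤ):ℂ) = 0).symm)
      | (intro _; exact (by norm_num : ((1:ℤ):ℂ) = 1).symm)
      | (intro _; exact (by norm_num : ((-1:ℤ):ℂ) = -1).symm)

set_option maxHeartbeats 2000000 in
lemma hX2bb : X2of Mbb = Bbb := by
  ext i j
  fin_cases i <;> fin_cases j <;>
    simp [X2of, Mbb, Bbb, Bint, Matrix.map_apply, Matrix.kroneckerMap_apply, Matrix.one_apply,
      finProdFinEquiv, Fin.divNat, Fin.modNat, Fin.ext_iff] <;>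
    first
      | rfl
      | (intro _; rfl)
      | (intro h; exact absurd h (by decide))
      | exact (by norm_num : ((0:ℤ):ℂ) = 0).symm
      | exact (by norm_num : ((1:ℤ):ℂ) = 1).symm
      | exact (by norm_num : ((-1:ℤ):ℂ) = -1).symm
      | (intro _; exact (by norm_num : ((0:ℤ):ℂ) = 0).symm)
      | (intro _; exact (by norm_num : ((1:ℤ):ℂ) = 1).symm)
      | (intro _; exact (by norm_num : ((-1:ℤ):ℂ) = -1).symm)

set_option maxHeartbeats 2000000 in
lemma hABAint : Aint * Bint * Aint = Bint * Aint * Bint := by decide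

lemma hABA : Abb * Bbb * Abb = Bbb * Abb * Bbb := by
  unfold Abb Bbb
  rw [← Matrix.map_mul, ← Matrix.map_mul, ← Matrix.map_mul, ← Matrix.map_mul, hABAint]

lemma X1of_smul (c : ℂ) (X : Matrix (Fin 4) (Fin 4) ℂ) : X1of (c • X) = c • X1of X := by
  simp [X1of, Matrix.smul_kronecker, Matrix.submatrix_smul]

lemma X2of_smul (c : ℂ) (X : Matrix (Fin 4) (Fin 4) ℂ) : X2of (c • X) = c • X2of X := by
  simp [X2of, Matrix.kronecker_smul, Matrix.submatrix_smul]

lemma hcbb : ((Real.sqrt 2 : ℂ)⁻¹) * ((Real.sqrt 2 : ℂ)⁻¹) = (2:ℂ)⁻¹ := by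
  rw [← mul_inv, ← Complex.ofReal_mul, Real.mul_self_sqrt (by norm_num)]
  norm_num

set_option maxHeartbeats 1000000 in
lemma hMHMbb : Mbbᴴ * Mbb = (2:ℂ) • 1 := by
  ext i j
  fin_cases i <;> fin_cases j <;>
    simp [Mbb, Matrix.mul_apply, Fin.sum_univ_four, Matrix.one_apply] <;> ring

theorem Bell_block_unitary_YBE :
    ((Real.sqrt 2 : ℂ)⁻¹ • (!![1, 0, 1, 0;
      0, 1, 0, -1;
      -1, 0, 1, 0;
      0, 1, 0, 1] : Matrix (Fin 4) (Fin 4) ℂ)) ∈ Matrix.unitaryGroup (Fin 4) ℂ ∧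
    YBE2 ((Real.sqrt 2 : ℂ)⁻¹ • (!![1, 0, 1, 0;
      0, 1, 0, -1;
      -1, 0, 1, 0;
      0, 1, 0, 1] : Matrix (Fin 4) (Fin 4) ℂ)) := by
  have hM : (!![1, 0, 1, 0; 0, 1, 0, -1; -1, 0, 1, 0; 0, 1, 0, 1] :
      Matrix (Fin 4) (Fin 4) ℂ) = Mbb := rfl
  rw [hM]
  constructor
  · rw [Matrix.mem_unitaryGroup_iff']
    show ((Real.sqrt 2 : ℂ)⁻¹ • Mbb)ᴴ * ((Real.sqrt 2 : ℂ)⁻¹ • Mbb) = 1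
    rw [Matrix.conjTranspose_smul, Matrix.smul_mul, Matrix.mul_smul, hMHMbb,
      smul_smul, smul_smul]
    have hstar : star ((Real.sqrt 2 : ℂ)⁻¹) = (Real.sqrt 2 : ℂ)⁻¹ := by
      simp [star_inv₀]
    rw [hstar, hcbb]
    norm_num
  · unfold YBE2
    rw [X1of_smul, X2of_smul, hX1bb, hX2bb]
    set c := (Real.sqrt 2 : ℂ)⁻¹
    calc c • Abb * (c • Bbb) * (c • Abb) = (c*c*c) • (Abb * Bbb * Abb) := by
          simp [Matrix.smul_mul, Matrix.mul_smul, smul_smul]; ring_nf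
      _ = (c*c*c) • (Bbb * Abb * Bbb) := by rw [hABA]
      _ = c • Bbb * (c • Abb) * (c • Bbb) := by
          simp [Matrix.smul_mul, Matrix.mul_smul, smul_smul]; ring_nf
end
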